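/- Let A = ℂ[a, b, x, y, z] and let ξ be the ℂ-derivation of A defined by ξ(a) = 0, ξ(b) = 0, ξ(x) = a², ξ(y) = ax + b, ξ(z) = y. Set I₁ = a, I₂ = b, I₃ = ax² + 2bx − 2a²y, I₄ = 2ax³ + 3bx² − 6a²xy + 6a⁴z. Then for every polynomial P ∈ A with ξ(P) = 0 there exists a natural number m such that a^m·P belongs to the ℂ-subalgebra of A generated by I₁, I₂, I₃, I₄. That is, the algebra of polynomial absolute invariants of ξ is generated by I₁, I₂, I₃, I₄ after localization at I₁ = a. -/

import Mathlib

open MvPolynomial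

/-- The polynomial ring `A = ℂ[a, b, x, y, z]`, with variable indices
`0 ↦ a`, `1 ↦ b`, `2 ↦ x`, `3 ↦ y`, `4 ↦ z`. -/
abbrev A5 : Type := MvPolynomial (Fin 5) ℂ

noncomputable def I1 : A5 := X 0
noncomputable def I2 : A5 := X 1
noncomputable def I3 : A5 := X 0 * X 2 ^ 2 + 2 * X 1 * X 2 - 2 * X 0 ^ 2 * X 3
noncomputable def I4 : A5 :=
  2 * X 0 * X 2 ^ 3 + 3 * X 1 * X 2 ^ 2 - 6 * X 0 ^ 2 * X 2 * X 3 + 6 * X 0 ^ 4 * X 4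

/-!
The flow `exp (t ξ)` is an algebra map `A → K[t]`, `K = Frac A`, sending each variable to a
polynomial of degree at most 3 in `t`; since `d/dt exp (t ξ) P = exp (t ξ) (ξ P)`, it is constant on
invariants. Evaluating at `t = -x/a²`, the time at which the flow line reaches `x = 0`, gives the
Dixmier map `π : A → K` with `π a = a`, `π b = b`, `π x = 0`, `π y = -I₃/(2a²)`, `π z = I₄/(6a⁴)`.
So an invariant `P = π P` is a polynomial in `a, b, I₃/a², I₄/a⁴`, and clearing denominators puts
`a^m P` in `ℂ[I₁, I₂, I₃, I₄]`.
-/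

namespace Derivation

open Polynomial (derivative)

variable {R A B : Type*} [CommRing R] [CommRing A] [Algebra R A] [CommRing B] [Algebra A B]
  [Algebra R B]

/-- `φ` is `exp (t ξ)` followed by the base change `A → B`. -/
structure IsFlow (ξ : Derivation R A A) (φ : A →ₐ[R] Polynomial B) : Prop where
  derivative_apply (P : A) : derivative (φ P) = φ (ξ P)
  eval_zero_apply (P : A) : (φ P).eval 0 = algebraMap A B P

theorem IsFlow.apply_eq_C [IsAddTorsionFree B] {ξ : Derivation R A A} {φ : A →ₐ[R] Polynomial B}
    (hφ : ξ.IsFlow φ) {P : A} (hP : ξ P = 0) : φ P = Polynomial.C (algebraMap A B P) := by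
  have hconst := Polynomial.eq_C_of_derivative_eq_zero (p := φ P)
    (by rw [hφ.derivative_apply, hP, map_zero])
  rwa [Polynomial.coeff_zero_eq_eval_zero, hφ.eval_zero_apply] at hconst

theorem IsFlow.of_X {σ : Type*} [Algebra (MvPolynomial σ R) B]
    [IsScalarTower R (MvPolynomial σ R) B] {ξ : Derivation R (MvPolynomial σ R) (MvPolynomial σ R)}
    {φ : MvPolynomial σ R →ₐ[R] Polynomial B}
    (hderiv : ∀ i, derivative (φ (X i)) = φ (ξ (X i)))
    (heval : ∀ i, (φ (X i)).eval 0 = algebraMap (MvPolynomial σ R) B (X i)) :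
    ξ.IsFlow φ where
  derivative_apply P := by
    induction P using MvPolynomial.induction_on with
    | C r =>
      rw [← MvPolynomial.algebraMap_eq, ξ.map_algebraMap, AlgHom.commutes, map_zero,
        Polynomial.algebraMap_apply, Polynomial.derivative_C]
    | add p q hp hq => rw [map_add, map_add, hp, hq, map_add, map_add]
    | mul_X p i hp =>
      rw [map_mul, Polynomial.derivative_mul, hp, hderiv, ξ.leibniz, smul_eq_mul, smul_eq_mul,
        map_add, map_mul, map_mul]
      ring
  eval_zero_apply P := by
    induction P using MvPolynomial.induction_on with
    | C r =>
      rw [← MvPolynomial.algebraMap_eq, AlgHom.commutes, Polynomial.algebraMap_apply,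
        Polynomial.eval_C, ← IsScalarTower.algebraMap_apply]
    | add p q hp hq => rw [map_add, Polynomial.eval_add, hp, hq, map_add]
    | mul_X p i hp => rw [map_mul, Polynomial.eval_mul, hp, heval, map_mul]

end Derivation

theorem MvPolynomial.exists_pow_mul_mem_of_forall_X {σ R B : Type*} [CommSemiring R]
    [CommSemiring B] [Algebra R B] (S : Subalgebra R B) {a : B} (ha : a ∈ S)
    (φ : MvPolynomial σ R →ₐ[R] B) (hX : ∀ i, ∃ m, a ^ m * φ (X i) ∈ S)
    (P : MvPolynomial σ R) : ∃ m, a ^ m * φ P ∈ S := by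
  induction P using MvPolynomial.induction_on with
  | C r => exact ⟨0, by simp [S.algebraMap_mem r]⟩
  | add p q hp hq =>
    obtain ⟨m, hm⟩ := hp
    obtain ⟨n, hn⟩ := hq
    refine ⟨m + n, ?_⟩
    rw [map_add]
    convert add_mem (mul_mem (pow_mem ha n) hm) (mul_mem (pow_mem ha m) hn) using 1
    ring
  | mul_X p i hp =>
    obtain ⟨m, hm⟩ := hp
    obtain ⟨n, hn⟩ := hX i
    refine ⟨m + n, ?_⟩
    rw [map_mul]
    convert mul_mem hm hn using 1
    ring

local notation "K" => FractionRing A5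
local notation "ι" => algebraMap A5 (FractionRing A5)

namespace A5

noncomputable def flow : A5 →ₐ[ℂ] Polynomial K :=
  aeval ![Polynomial.C (ι (X 0)),
    Polynomial.C (ι (X 1)),
    Polynomial.C (ι (X 2)) + Polynomial.C (ι (X 0) ^ 2) * Polynomial.X,
    Polynomial.C (ι (X 3)) + Polynomial.C (ι (X 0 * X 2 + X 1)) * Polynomial.X
      + Polynomial.C (ι (X 0) ^ 3 / 2) * Polynomial.X ^ 2,
    Polynomial.C (ι (X 4)) + Polynomial.C (ι (X 3)) * Polynomial.X
      + Polynomial.C (ι (X 0 * X 2 + X 1) / 2) * Polynomial.X ^ 2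
      + Polynomial.C (ι (X 0) ^ 3 / 6) * Polynomial.X ^ 3]

theorem isFlow_flow (ξ : Derivation ℂ A5 A5)
    (ha : ξ (X 0) = 0) (hb : ξ (X 1) = 0) (hx : ξ (X 2) = X 0 ^ 2)
    (hy : ξ (X 3) = X 0 * X 2 + X 1) (hz : ξ (X 4) = X 3) : ξ.IsFlow flow := by
  refine .of_X (fun i => Polynomial.funext fun r => ?_) (fun i => ?_) <;>
    fin_cases i <;> simp [flow, ha, hb, hx, hy, hz, Polynomial.derivative_pow] <;> ring

noncomputable def dixmier : A5 →ₐ[ℂ] K :=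
  ((Polynomial.aeval (-ι (X 2) / ι (X 0) ^ 2)).restrictScalars ℂ).comp flow

theorem algebraMap_X_zero_ne_zero : ι (X 0) ≠ 0 :=
  (map_ne_zero_iff _ (IsFractionRing.injective A5 K)).2 (X_ne_zero 0)

theorem dixmier_X_two : dixmier (X 2) = 0 := by
  have := algebraMap_X_zero_ne_zero
  simp [dixmier, flow]
  field_simp
  ring

theorem dixmier_X_three : dixmier (X 3) = -ι I3 / (2 * ι (X 0) ^ 2) := by
  have := algebraMap_X_zero_ne_zero
  simp [dixmier, flow, I3, map_ofNat]
  field_simp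
  ring

theorem dixmier_X_four : dixmier (X 4) = ι I4 / (6 * ι (X 0) ^ 4) := by
  have := algebraMap_X_zero_ne_zero
  simp [dixmier, flow, I4, map_ofNat]
  field_simp
  ring

theorem exists_pow_mul_dixmier_X_mem (i : Fin 5) : ∃ m, ι (X 0) ^ m * dixmier (X i) ∈
    (Algebra.adjoin ℂ ({I1, I2, I3, I4} : Set A5)).map (IsScalarTower.toAlgHom ℂ A5 K) := by
  have hI : ∀ I ∈ ({I1, I2, I3, I4} : Set A5),
      ι I ∈ (Algebra.adjoin ℂ ({I1, I2, I3, I4} : Set A5)).map (IsScalarTower.toAlgHom ℂ A5 K) :=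
    fun I hI => Subalgebra.mem_map.2 ⟨I, Algebra.subset_adjoin hI, rfl⟩
  have := algebraMap_X_zero_ne_zero
  fin_cases i
  · exact ⟨0, by simpa [dixmier, flow] using hI (X 0) (by simp [I1])⟩
  · exact ⟨0, by simpa [dixmier, flow] using hI (X 1) (by simp [I2])⟩
  · exact ⟨0, by simp [dixmier_X_two]⟩
  · refine ⟨2, ?_⟩
    convert Subalgebra.smul_mem _ (hI I3 (by simp)) (-2⁻¹ : ℂ) using 1
    simp only [Fin.reduceFinMk, dixmier_X_three, Algebra.smul_def, map_neg, map_inv₀, map_ofNat]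
    field_simp
  · refine ⟨4, ?_⟩
    convert Subalgebra.smul_mem _ (hI I4 (by simp)) (6⁻¹ : ℂ) using 1
    simp only [Fin.reduceFinMk, dixmier_X_four, Algebra.smul_def, map_inv₀, map_ofNat]
    field_simp

end A5

open A5

/-- Let `ξ` be the ℂ-derivation of `A = ℂ[a, b, x, y, z]` with
`ξ(a) = 0`, `ξ(b) = 0`, `ξ(x) = a²`, `ξ(y) = ax + b`, `ξ(z) = y`.  Then for every `P` with
`ξ(P) = 0` there exists `m ∈ ℕ` such that `a^m·P` belongs to the ℂ-subalgebra generated by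
`I₁, I₂, I₃, I₄`: the algebra of polynomial absolute invariants of `ξ` is generated by
`I₁, I₂, I₃, I₄` after localization at `I₁ = a`. -/
theorem invariants_generated_after_localization
    (ξ : Derivation ℂ A5 A5)
    (ha : ξ (X 0) = 0) (hb : ξ (X 1) = 0) (hx : ξ (X 2) = X 0 ^ 2)
    (hy : ξ (X 3) = X 0 * X 2 + X 1) (hz : ξ (X 4) = X 3) :
    ∀ P : A5, ξ P = 0 →
      ∃ m : ℕ, X 0 ^ m * P ∈ Algebra.adjoin ℂ ({I1, I2, I3, I4} : Set A5) := by
  intro P hP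
  set S := Algebra.adjoin ℂ ({I1, I2, I3, I4} : Set A5)
  have hfixed : dixmier P = ι P := by
    rw [dixmier, AlgHom.comp_apply, (isFlow_flow ξ ha hb hx hy hz).apply_eq_C hP]
    simp
  obtain ⟨m, hm⟩ := MvPolynomial.exists_pow_mul_mem_of_forall_X _
    (Subalgebra.mem_map.2 ⟨X 0, Algebra.subset_adjoin (by simp [I1]), rfl⟩) dixmier
    exists_pow_mul_dixmier_X_mem P
  refine ⟨m, ?_⟩
  rw [← Subalgebra.comap_map_eq_self_of_injective (f := IsScalarTower.toAlgHom ℂ A5 K)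
    (IsFractionRing.injective A5 K) S, Subalgebra.mem_comap, map_mul, map_pow]
  simpa [hfixed] using hm
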